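/- Let f satisfy the δ-RIP_{2r,2r} property with δ ∈ (0, 1/3), let M* be its global minimizer over the low-rank feasible set with ∇f(M*) = 0 and rank(M*) ≤ r, and run the Singular Value Projection algorithm with step size η = 1/(1+δ): starting from M₀ in the feasible set, M_{t+1} is any Frobenius-orthogonal projection of M_t − η∇f(M_t) onto the feasible set. Then for every ε > 0, after T := ⌈ log[(f(M₀) − f(M*))/ε] / log[(1−δ)/(2δ)] ⌉ iterations the iterate M_T lies in the feasible set and satisfies f(M_T) − f(M*) ≤ ε. -/

import Mathlib

open Matrix

attribute [local instance] Matrix.frobeniusSeminormedAddCommGroup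
  Matrix.frobeniusNormedAddCommGroup Matrix.frobeniusNormedSpace

/-- Hessian quadratic/bilinear form of `f` at `x`, evaluated at directions `v, w`. -/
noncomputable def hess {E : Type*} [NormedAddCommGroup E] [NormedSpace ℝ E]
    (f : E → ℝ) (x v w : E) : ℝ :=
  iteratedFDeriv ℝ 2 f x ![v, w]

/-- Second-order critical point: vanishing gradient and positive semidefinite Hessian. -/
def IsSOCP {E : Type*} [NormedAddCommGroup E] [NormedSpace ℝ E]
    (f : E → ℝ) (x : E) : Prop :=
  fderiv ℝ f x = 0 ∧ ∀ v : E, 0 ≤ hess f x v v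

/-- The `δ`-RIP₂ᵣ,₂ₜ property (Frobenius norm). -/
def RIP {I J : Type*} [Fintype I] [Fintype J]
    (r t : ℕ) (δ : ℝ) (f : Matrix I J ℝ → ℝ) : Prop :=
  ∀ M K : Matrix I J ℝ, M.rank ≤ 2 * r → K.rank ≤ 2 * t →
    (1 - δ) * ‖K‖ ^ 2 ≤ hess f M K K ∧ hess f M K K ≤ (1 + δ) * ‖K‖ ^ 2

/-- The `κ`-BDP₂ₜ property. -/
def BDP {I J : Type*} [Fintype I] [Fintype J]
    (t : ℕ) (κ : ℝ) (f : Matrix I J ℝ → ℝ) : Prop :=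
  ∀ M M' K L : Matrix I J ℝ, M.rank ≤ 2 * t → M'.rank ≤ 2 * t →
    K.rank ≤ 2 * t → L.rank ≤ 2 * t →
    |hess f M K L - hess f M' K L| ≤ κ * ‖K‖ * ‖L‖

/-- Gradient of `f` at `M`, as a matrix (w.r.t. the Frobenius inner product). -/
noncomputable def mgrad {I J : Type*} [Fintype I] [Fintype J] [DecidableEq I] [DecidableEq J]
    (f : Matrix I J ℝ → ℝ) (M : Matrix I J ℝ) : Matrix I J ℝ :=
  Matrix.of fun i j => fderiv ℝ f M (Matrix.single i j 1)

/-- Trace inner product `⟨X, Y⟩ = tr(Xᵀ Y)` of matrices. -/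
noncomputable def minner {I J : Type*} [Fintype I] [Fintype J]
    (X Y : Matrix I J ℝ) : ℝ :=
  Matrix.trace (Xᵀ * Y)

/-- Objective of the factorized asymmetric problem (3). -/
noncomputable def ha {n m r : ℕ} (f : Matrix (Fin n) (Fin m) ℝ → ℝ)
    (p : Matrix (Fin n) (Fin r) ℝ × Matrix (Fin m) (Fin r) ℝ) : ℝ :=
  f (p.1 * p.2ᵀ)

/-- Objective of the regularized asymmetric problem (5). -/
noncomputable def rhoA {n m r : ℕ} (f : Matrix (Fin n) (Fin m) ℝ → ℝ) (μ : ℝ)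
    (p : Matrix (Fin n) (Fin r) ℝ × Matrix (Fin m) (Fin r) ℝ) : ℝ :=
  f (p.1 * p.2ᵀ) + μ / 4 * ‖p.1ᵀ * p.1 - p.2ᵀ * p.2‖ ^ 2

/-- Objective of the symmetric factorized problem (4). -/
noncomputable def hs {n r : ℕ} (f : Matrix (Fin n) (Fin n) ℝ → ℝ)
    (U : Matrix (Fin n) (Fin r) ℝ) : ℝ :=
  f (U * Uᵀ)

/-!
Every point of a segment between two matrices of rank at most `r`, and its direction, have rank
at most `2r`, so RIP yields the two-sided Taylor bounds
`(1-δ)/2 ‖y-x‖² ≤ f y - f x - Df(x)(y-x) ≤ (1+δ)/2 ‖y-x‖²` for such `x, y`.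
Completing the square shows that, for `η = 1/(1+δ)`, the SVP step minimises the upper quadratic
model at `Mₜ` over the rank-`r` matrices; comparing with `M*` and using the lower bound at `Mₜ`
gives `f(Mₜ₊₁) ≤ f(M*) + δ ‖Mₜ - M*‖²`. The lower bound at the critical point `M*` gives
`(1-δ)/2 ‖Mₜ - M*‖² ≤ f(Mₜ) - f(M*)`, so the gap contracts by the factor `2δ/(1-δ) < 1`.
-/

section Rank

variable {I J K : Type*} [Fintype J] [Field K]

theorem Matrix.rank_add_le (A B : Matrix I J K) : (A + B).rank ≤ A.rank + B.rank := by
  have hrange : LinearMap.range (A + B).mulVecLin ≤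
      LinearMap.range A.mulVecLin ⊔ LinearMap.range B.mulVecLin := by
    rintro _ ⟨v, rfl⟩
    rw [Matrix.mulVecLin_add]
    exact Submodule.add_mem_sup ⟨v, rfl⟩ ⟨v, rfl⟩
  exact (Submodule.finrank_mono hrange).trans (Submodule.finrank_add_le_finrank_add_finrank _ _)

theorem Matrix.rank_smul_le (c : K) (A : Matrix I J K) : (c • A).rank ≤ A.rank := by
  classical
  simpa using A.rank_mul_le_left (c • (1 : Matrix J J K))

theorem Matrix.rank_smul_add_smul_le (a b : K) (A B : Matrix I J K) :
    (a • A + b • B).rank ≤ A.rank + B.rank :=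
  (Matrix.rank_add_le _ _).trans (add_le_add (Matrix.rank_smul_le a A) (Matrix.rank_smul_le b B))

end Rank

section Frobenius

variable {I J : Type*} [Fintype I] [Fintype J]

theorem minner_comm (X Y : Matrix I J ℝ) : minner X Y = minner Y X := by
  rw [minner, minner, ← Matrix.trace_transpose, Matrix.transpose_mul, Matrix.transpose_transpose]

theorem minner_add_left (X Y Z : Matrix I J ℝ) : minner (X + Y) Z = minner X Z + minner Y Z := by
  simp only [minner, Matrix.transpose_add, Matrix.add_mul, Matrix.trace_add]

theorem minner_add_right (X Y Z : Matrix I J ℝ) : minner X (Y + Z) = minner X Y + minner X Z := by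
  simp only [minner, Matrix.mul_add, Matrix.trace_add]

theorem minner_smul_right (c : ℝ) (X Y : Matrix I J ℝ) : minner X (c • Y) = c * minner X Y := by
  simp only [minner, Matrix.mul_smul, Matrix.trace_smul, smul_eq_mul]

theorem minner_eq_sum (X Y : Matrix I J ℝ) : minner X Y = ∑ i, ∑ j, X i j * Y i j := by
  simp only [minner, Matrix.trace, Matrix.diag, Matrix.mul_apply, Matrix.transpose_apply]
  exact Finset.sum_comm

theorem frobenius_norm_sq_eq_minner (X : Matrix I J ℝ) : ‖X‖ ^ 2 = minner X X := by
  rw [Matrix.frobenius_norm_def, minner_eq_sum, ← Real.rpow_natCast,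
    ← Real.rpow_mul (by positivity)]
  norm_num [← sq]

theorem frobenius_norm_add_sq (X Y : Matrix I J ℝ) :
    ‖X + Y‖ ^ 2 = ‖X‖ ^ 2 + 2 * minner X Y + ‖Y‖ ^ 2 := by
  simp only [frobenius_norm_sq_eq_minner, minner_add_left, minner_add_right, minner_comm Y X]
  ring

theorem fderiv_apply_eq_minner_mgrad [DecidableEq I] [DecidableEq J]
    (f : Matrix I J ℝ → ℝ) (M K : Matrix I J ℝ) : fderiv ℝ f M K = minner (mgrad f M) K := by
  conv_lhs => rw [Matrix.matrix_eq_sum_single K]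
  simp only [map_sum, minner_eq_sum, mgrad, Matrix.of_apply]
  refine Finset.sum_congr rfl fun i _ => Finset.sum_congr rfl fun j _ => ?_
  rw [show Matrix.single i j (K i j) = K i j • Matrix.single i j 1 by simp, map_smul, smul_eq_mul,
    mul_comm]

end Frobenius

section Taylor

theorem add_deriv_add_half_le_of_le_deriv2 {φ φ' φ'' : ℝ → ℝ} {c : ℝ}
    (hφ : ∀ s, HasDerivAt φ (φ' s) s) (hφ' : ∀ s, HasDerivAt φ' (φ'' s) s)
    (hc : ∀ s ∈ Set.Icc (0 : ℝ) 1, c ≤ φ'' s) :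
    φ 0 + φ' 0 + c / 2 ≤ φ 1 := by
  have hψ (s : ℝ) : HasDerivAt (fun s => φ s - c / 2 * s ^ 2) (φ' s - c * s) s :=
    ((hφ s).sub ((hasDerivAt_pow 2 s).const_mul (c / 2))).congr_deriv (by ring)
  have hψ' (s : ℝ) : HasDerivAt (fun s => φ' s - c * s) (φ'' s - c) s :=
    ((hφ' s).sub ((hasDerivAt_id' s).const_mul c)).congr_deriv (by ring)
  have hconvex : ConvexOn ℝ (Set.Icc 0 1) (fun s => φ s - c / 2 * s ^ 2) := by
    refine convexOn_of_hasDerivWithinAt2_nonneg (convex_Icc 0 1)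
      (HasDerivAt.continuousOn fun s _ => hψ s) (fun s _ => (hψ s).hasDerivWithinAt)
      (fun s _ => (hψ' s).hasDerivWithinAt) fun s hs => ?_
    rw [interior_Icc] at hs
    exact sub_nonneg.2 (hc s (Set.Ioo_subset_Icc_self hs))
  have := hconvex.le_slope_of_hasDerivAt (by simp) (by simp) zero_lt_one (hψ 0)
  simp only [slope_def_field] at this
  linarith

theorem le_add_deriv_add_half_of_deriv2_le {φ φ' φ'' : ℝ → ℝ} {C : ℝ}
    (hφ : ∀ s, HasDerivAt φ (φ' s) s) (hφ' : ∀ s, HasDerivAt φ' (φ'' s) s)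
    (hC : ∀ s ∈ Set.Icc (0 : ℝ) 1, φ'' s ≤ C) :
    φ 1 ≤ φ 0 + φ' 0 + C / 2 := by
  have := add_deriv_add_half_le_of_le_deriv2 (φ := -φ) (c := -C) (fun s => (hφ s).neg)
    (fun s => (hφ' s).neg) fun s hs => neg_le_neg (hC s hs)
  simp only [Pi.neg_apply] at this
  linarith

variable {E : Type*} [NormedAddCommGroup E] [NormedSpace ℝ E]

theorem hasDerivAt_comp_add_smul {F : Type*} [NormedAddCommGroup F] [NormedSpace ℝ F]
    {g : E → F} {x v : E} {s : ℝ} (hg : DifferentiableAt ℝ g (x + s • v)) :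
    HasDerivAt (fun s : ℝ => g (x + s • v)) (fderiv ℝ g (x + s • v) v) s := by
  refine hg.hasFDerivAt.comp_hasDerivAt s ?_
  simpa using ((hasDerivAt_id s).smul_const v).const_add x

theorem hasDerivAt_fderiv_comp_add_smul {f : E → ℝ} (hf : ContDiff ℝ 2 f) (x v : E) (s : ℝ) :
    HasDerivAt (fun s : ℝ => fderiv ℝ f (x + s • v) v) (hess f (x + s • v) v v) s := by
  have hf' : Differentiable ℝ (fderiv ℝ f) :=
    (hf.fderiv_right (by norm_num)).differentiable one_ne_zero
  have := hasDerivAt_comp_add_smul (g := fun y => fderiv ℝ f y v) (s := s) (x := x) (v := v)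
    ((hf' _).clm_apply (differentiableAt_const v))
  rw [fderiv_clm_apply (hf' _) (differentiableAt_const v)] at this
  simpa [hess, iteratedFDeriv_two_apply] using this

theorem add_fderiv_add_half_le_of_le_hess {f : E → ℝ} (hf : ContDiff ℝ 2 f) {x v : E} {c : ℝ}
    (hc : ∀ s ∈ Set.Icc (0 : ℝ) 1, c ≤ hess f (x + s • v) v v) :
    f x + fderiv ℝ f x v + c / 2 ≤ f (x + v) := by
  simpa using add_deriv_add_half_le_of_le_deriv2
    (fun s => hasDerivAt_comp_add_smul (x := x) (v := v) (hf.differentiable two_ne_zero _))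
    (hasDerivAt_fderiv_comp_add_smul hf x v) hc

theorem le_add_fderiv_add_half_of_hess_le {f : E → ℝ} (hf : ContDiff ℝ 2 f) {x v : E} {C : ℝ}
    (hC : ∀ s ∈ Set.Icc (0 : ℝ) 1, hess f (x + s • v) v v ≤ C) :
    f (x + v) ≤ f x + fderiv ℝ f x v + C / 2 := by
  simpa using le_add_deriv_add_half_of_deriv2_le
    (fun s => hasDerivAt_comp_add_smul (x := x) (v := v) (hf.differentiable two_ne_zero _))
    (hasDerivAt_fderiv_comp_add_smul hf x v) hC

end Taylor

def IsRankProj {I J : Type*} [Fintype I] [Fintype J] (r : ℕ) (X P : Matrix I J ℝ) : Prop :=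
  P.rank ≤ r ∧ ∀ K : Matrix I J ℝ, K.rank ≤ r → ‖P - X‖ ≤ ‖K - X‖

section GradientStep

variable {I J : Type*} [Fintype I] [Fintype J] [DecidableEq I] [DecidableEq J]

theorem fderiv_add_half_mul_norm_sq_eq (f : Matrix I J ℝ → ℝ) (M A : Matrix I J ℝ) {L : ℝ}
    (hL : L ≠ 0) :
    fderiv ℝ f M (A - M) + L / 2 * ‖A - M‖ ^ 2 =
      L / 2 * ‖A - (M - (1 / L) • mgrad f M)‖ ^ 2 - ‖mgrad f M‖ ^ 2 / (2 * L) := by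
  rw [sub_sub_eq_add_sub, add_sub_right_comm, frobenius_norm_add_sq, norm_smul,
    fderiv_apply_eq_minner_mgrad, minner_comm, minner_smul_right, mul_pow, Real.norm_eq_abs,
    sq_abs]
  field_simp
  ring

theorem IsRankProj.fderiv_add_half_mul_norm_sq_le {r : ℕ} {f : Matrix I J ℝ → ℝ}
    {M P K : Matrix I J ℝ} {L : ℝ} (hL : 0 < L) (hP : IsRankProj r (M - (1 / L) • mgrad f M) P)
    (hK : K.rank ≤ r) :
    fderiv ℝ f M (P - M) + L / 2 * ‖P - M‖ ^ 2 ≤ fderiv ℝ f M (K - M) + L / 2 * ‖K - M‖ ^ 2 := by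
  rw [fderiv_add_half_mul_norm_sq_eq f M P hL.ne', fderiv_add_half_mul_norm_sq_eq f M K hL.ne']
  gcongr
  exact hP.2 K hK

end GradientStep

namespace RIP

variable {I J : Type*} [Fintype I] [Fintype J] {r : ℕ} {δ : ℝ} {f : Matrix I J ℝ → ℝ}
  {x y : Matrix I J ℝ}

theorem hess_bounds_on_segment (hrip : RIP r r δ f) (hx : x.rank ≤ r) (hy : y.rank ≤ r)
    (s : ℝ) :
    (1 - δ) * ‖y - x‖ ^ 2 ≤ hess f (x + s • (y - x)) (y - x) (y - x) ∧
      hess f (x + s • (y - x)) (y - x) (y - x) ≤ (1 + δ) * ‖y - x‖ ^ 2 := by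
  have hseg : x + s • (y - x) = (1 - s) • x + s • y := by module
  have hdiff : y - x = (1 : ℝ) • y + (-1 : ℝ) • x := by module
  refine hrip _ _ ?_ ?_
  · rw [hseg]; linarith [Matrix.rank_smul_add_smul_le (1 - s) s x y]
  · rw [hdiff]; linarith [Matrix.rank_smul_add_smul_le 1 (-1) y x]

theorem add_fderiv_add_le (hrip : RIP r r δ f) (hf : ContDiff ℝ 2 f)
    (hx : x.rank ≤ r) (hy : y.rank ≤ r) :
    f x + fderiv ℝ f x (y - x) + (1 - δ) / 2 * ‖y - x‖ ^ 2 ≤ f y := by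
  have := add_fderiv_add_half_le_of_le_hess hf fun s _ => (hrip.hess_bounds_on_segment hx hy s).1
  rwa [add_sub_cancel, mul_div_right_comm] at this

theorem le_add_fderiv_add (hrip : RIP r r δ f) (hf : ContDiff ℝ 2 f)
    (hx : x.rank ≤ r) (hy : y.rank ≤ r) :
    f y ≤ f x + fderiv ℝ f x (y - x) + (1 + δ) / 2 * ‖y - x‖ ^ 2 := by
  have := le_add_fderiv_add_half_of_hess_le hf fun s _ => (hrip.hess_bounds_on_segment hx hy s).2
  rwa [add_sub_cancel, mul_div_right_comm] at this

theorem quadratic_growth_of_fderiv_eq_zero (hrip : RIP r r δ f) (hf : ContDiff ℝ 2 f)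
    (hcrit : fderiv ℝ f x = 0) (hx : x.rank ≤ r) (hy : y.rank ≤ r) :
    (1 - δ) / 2 * ‖y - x‖ ^ 2 ≤ f y - f x := by
  have := hrip.add_fderiv_add_le hf hx hy
  rw [hcrit, _root_.zero_apply] at this
  linarith

theorem le_add_mul_norm_sq_of_isRankProj [DecidableEq I] [DecidableEq J] {M P K : Matrix I J ℝ}
    (hrip : RIP r r δ f) (hf : ContDiff ℝ 2 f) (hδ : 0 < 1 + δ) (hM : M.rank ≤ r)
    (hP : IsRankProj r (M - (1 / (1 + δ)) • mgrad f M) P) (hK : K.rank ≤ r) :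
    f P ≤ f K + δ * ‖K - M‖ ^ 2 := by
  have hupper := hrip.le_add_fderiv_add hf hM hP.1
  have hlower := hrip.add_fderiv_add_le hf hM hK
  have hproj := hP.fderiv_add_half_mul_norm_sq_le hδ hK
  linarith

theorem sub_le_mul_sub_of_isRankProj [DecidableEq I] [DecidableEq J] {M P K : Matrix I J ℝ}
    (hrip : RIP r r δ f) (hf : ContDiff ℝ 2 f) (hδ0 : 0 ≤ δ) (hδ1 : δ < 1)
    (hcrit : fderiv ℝ f K = 0) (hK : K.rank ≤ r) (hM : M.rank ≤ r)
    (hP : IsRankProj r (M - (1 / (1 + δ)) • mgrad f M) P) :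
    f P - f K ≤ 2 * δ / (1 - δ) * (f M - f K) := by
  have hstep := hrip.le_add_mul_norm_sq_of_isRankProj hf (by linarith) hM hP hK
  have hgrowth := hrip.quadratic_growth_of_fderiv_eq_zero hf hcrit hK hM
  rw [norm_sub_rev] at hstep
  have hδ1' : 1 - δ ≠ 0 := by linarith
  calc f P - f K ≤ δ * ‖M - K‖ ^ 2 := by linarith
    _ = 2 * δ / (1 - δ) * ((1 - δ) / 2 * ‖M - K‖ ^ 2) := by field_simp
    _ ≤ 2 * δ / (1 - δ) * (f M - f K) :=
        mul_le_mul_of_nonneg_left hgrowth (div_nonneg (by linarith) (by linarith))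

end RIP
theorem pow_ceil_log_div_mul_le {q e ε : ℝ} (hq0 : 0 < q) (hq1 : q < 1) (he : 0 ≤ e)
    (hε : 0 < ε) : q ^ ⌈Real.log (e / ε) / Real.log q⁻¹⌉₊ * e ≤ ε := by
  set T := ⌈Real.log (e / ε) / Real.log q⁻¹⌉₊
  rcases he.eq_or_lt with rfl | he
  · simpa using hε.le
  have hlog : 0 < Real.log q⁻¹ := Real.log_pos ((one_lt_inv₀ hq0).2 hq1)
  have hT : Real.log (e / ε) ≤ Real.log (q⁻¹ ^ T) := by
    rw [Real.log_pow]
    exact (div_le_iff₀ hlog).1 (Nat.le_ceil _)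
  have hratio : e / ε ≤ (q ^ T)⁻¹ := by
    rw [← inv_pow]
    exact (Real.log_le_log_iff (by positivity) (by positivity)).1 hT
  rw [div_le_iff₀ hε] at hratio
  calc q ^ T * e ≤ q ^ T * ((q ^ T)⁻¹ * ε) := by gcongr
    _ = ε := by field_simp

theorem statement1_general (n m r : ℕ) (δ : ℝ) (hδ0 : 0 < δ) (hδ1 : δ < 1 / 3)
    (f : Matrix (Fin n) (Fin m) ℝ → ℝ) (hf : ContDiff ℝ 2 f) (hrip : RIP r r δ f)
    (Mstar : Matrix (Fin n) (Fin m) ℝ)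
    (hcrit : fderiv ℝ f Mstar = 0) (hrankstar : Mstar.rank ≤ r)
    (Mseq : ℕ → Matrix (Fin n) (Fin m) ℝ) (h0 : (Mseq 0).rank ≤ r)
    (hstep : ∀ t : ℕ, (Mseq (t + 1)).rank ≤ r ∧
      ∀ K : Matrix (Fin n) (Fin m) ℝ, K.rank ≤ r →
        ‖Mseq (t + 1) - (Mseq t - (1 / (1 + δ)) • mgrad f (Mseq t))‖ ≤
          ‖K - (Mseq t - (1 / (1 + δ)) • mgrad f (Mseq t))‖)
    (ε : ℝ) (hε : 0 < ε) :
    (Mseq ⌈Real.log ((f (Mseq 0) - f Mstar) / ε) / Real.log ((1 - δ) / (2 * δ))⌉₊).rank ≤ r ∧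
    f (Mseq ⌈Real.log ((f (Mseq 0) - f Mstar) / ε) / Real.log ((1 - δ) / (2 * δ))⌉₊) - f Mstar
      ≤ ε := by
  have hrank : ∀ t, (Mseq t).rank ≤ r
    | 0 => h0
    | t + 1 => (hstep t).1
  refine ⟨hrank _, ?_⟩
  have hδ1' : 0 < 1 - δ := by linarith
  have hq0 : 0 < 2 * δ / (1 - δ) := by positivity
  have hq1 : 2 * δ / (1 - δ) < 1 := (div_lt_one hδ1').2 (by linarith)
  have hgap0 : 0 ≤ f (Mseq 0) - f Mstar :=
    (mul_nonneg (by positivity) (sq_nonneg _)).trans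
      (hrip.quadratic_growth_of_fderiv_eq_zero hf hcrit hrankstar h0)
  have hgeo : ∀ T, f (Mseq T) - f Mstar ≤ (2 * δ / (1 - δ)) ^ T * (f (Mseq 0) - f Mstar) :=
    fun T => le_geom (u := fun t => f (Mseq t) - f Mstar) hq0.le T fun t _ =>
      hrip.sub_le_mul_sub_of_isRankProj hf hδ0.le (by linarith) hcrit hrankstar (hrank t)
        (hstep t)
  rw [← inv_div (2 * δ) (1 - δ)]
  exact (hgeo _).trans (pow_ceil_log_div_mul_le hq0 hq1 hgap0 hε)

/-- Linear convergence of the Singular Value Projection algorithm under `δ`-RIP with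
`δ < 1/3` and step size `1/(1+δ)`. -/
theorem statement1 (n m r : ℕ) (δ : ℝ) (hδ0 : 0 < δ) (hδ1 : δ < 1 / 3)
    (f : Matrix (Fin n) (Fin m) ℝ → ℝ) (hf : ContDiff ℝ 2 f) (hrip : RIP r r δ f)
    (Mstar : Matrix (Fin n) (Fin m) ℝ)
    (hmin : ∀ K : Matrix (Fin n) (Fin m) ℝ, K.rank ≤ r → f Mstar ≤ f K)
    (hcrit : fderiv ℝ f Mstar = 0) (hrankstar : Mstar.rank ≤ r)
    (Mseq : ℕ → Matrix (Fin n) (Fin m) ℝ) (h0 : (Mseq 0).rank ≤ r)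
    (hstep : ∀ t : ℕ, (Mseq (t + 1)).rank ≤ r ∧
      ∀ K : Matrix (Fin n) (Fin m) ℝ, K.rank ≤ r →
        ‖Mseq (t + 1) - (Mseq t - (1 / (1 + δ)) • mgrad f (Mseq t))‖ ≤
          ‖K - (Mseq t - (1 / (1 + δ)) • mgrad f (Mseq t))‖)
    (ε : ℝ) (hε : 0 < ε) :
    (Mseq ⌈Real.log ((f (Mseq 0) - f Mstar) / ε) / Real.log ((1 - δ) / (2 * δ))⌉₊).rank ≤ r ∧
    f (Mseq ⌈Real.log ((f (Mseq 0) - f Mstar) / ε) / Real.log ((1 - δ) / (2 * δ))⌉₊) - f Mstar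
      ≤ ε :=
  statement1_general n m r δ hδ0 hδ1 f hf hrip Mstar hcrit hrankstar Mseq h0 hstep ε hε
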